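/- Let T = (V,E) be an infinite tree (connected acyclic simple graph) with path metric d, let s be a natural number such that ρ(v) ≤ s for all v ∈ V, let (aₙ)ₙ∈ℕ be an arrow in T, and for each n let T(aₙ) denote the connected component of aₙ in the graph obtained from T by deleting all edges (aₖ, a_{k+1}), k ∈ ℕ. Then T is an asymptotic ray if and only if there exists a natural number t such that |V(T(aₙ))| ≤ t for all n ∈ ℕ, where V(T(aₙ)) is the vertex set of T(aₙ). -/

import Mathlib

/-- `a` is an arrow in `G`: an injective sequence of vertices with consecutive terms
adjacent and `d(a 0, a n) = n` for all `n`. -/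
def IsArrow {V : Type*} (G : SimpleGraph V) (a : ℕ → V) : Prop :=
  Function.Injective a ∧ ∀ n : ℕ, G.Adj (a n) (a (n + 1)) ∧ G.dist (a 0) (a n) = n

/-- `G` is an asymptotic ray: there is a bijection `f : V → ℕ` and naturals `m, m'` with
`|f u - f v| ≤ m * d(u,v)` and `d(f⁻¹ i, f⁻¹ j) ≤ m' * |i - j|`. -/
def IsAsymptoticRay {V : Type*} (G : SimpleGraph V) : Prop :=
  ∃ f : V ≃ ℕ, ∃ m m' : ℕ,
    (∀ u v : V, Nat.dist (f u) (f v) ≤ m * G.dist u v) ∧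
    (∀ i j : ℕ, G.dist (f.symm i) (f.symm j) ≤ m' * Nat.dist i j)

/-- The vertex set of `T(aₙ)`: the connected component of `a n` in the graph obtained
from `G` by deleting the edges `(aₖ, a_{k+1})`, `k ∈ ℕ` (but not the vertices). -/
def arrowComponent {V : Type*} (G : SimpleGraph V) (a : ℕ → V) (n : ℕ) : Set V :=
  {v : V | (G.deleteEdges {e : Sym2 V | ∃ k : ℕ, e = s(a k, a (k + 1))}).Reachable (a n) v}

/-!
Deleting the arrow's edges cuts `T` into the trees `T(aₙ)`. The arrow's edges are bridges, so
the `T(aₙ)` are pairwise distinct, and a geodesic from any `aⱼ` to a vertex of `T(aₙ)` passes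
through `aₙ`.

If `f : V ≃ ℕ` is bi-Lipschitz, the values `f (aₖ)` move in steps of at most `m` and tend to
infinity, so every value `f v ≥ f (a₀)` lies within `m` of some `f (aₖ)`. Hence every vertex of
`T(aₙ)` is uniformly close to `aₙ`, and `f` maps `T(aₙ)` into an interval of bounded length.

Conversely, if every `T(aₙ)` has at most `t` vertices, it has depth at most `t`, so sending
`T(aₙ)` to `n` is a quasi-isometry onto `ℕ`. Enumerating `T(a₀)`, then `T(a₁)`, and so on turns
it into a bijection with the same coarse bounds.
-/

open SimpleGraph

def blockStart (c : ℕ → ℕ) (n : ℕ) : ℕ := ∑ k ∈ Finset.range n, c k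

def blockIndex (c : ℕ → ℕ) (i : ℕ) : ℕ := Nat.findGreatest (fun n => blockStart c n ≤ i) i

section Blocks

variable {c : ℕ → ℕ} {t : ℕ}

lemma blockStart_zero : blockStart c 0 = 0 := Finset.sum_range_zero c

lemma blockStart_succ (n : ℕ) : blockStart c (n + 1) = blockStart c n + c n :=
  Finset.sum_range_succ c n

lemma add_le_blockStart_add (hc : ∀ n, 1 ≤ c n) (n k : ℕ) :
    blockStart c n + k ≤ blockStart c (n + k) := by
  induction k with
  | zero => rfl
  | succ k ih =>
    rw [← Nat.add_assoc n k 1, blockStart_succ]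
    have := hc (n + k)
    omega

lemma blockStart_add_le (hc : ∀ n, c n ≤ t) (n k : ℕ) :
    blockStart c (n + k) ≤ blockStart c n + t * k := by
  induction k with
  | zero => simp
  | succ k ih =>
    rw [← Nat.add_assoc n k 1, blockStart_succ, mul_add_one]
    have := hc (n + k)
    omega

lemma blockIndex_eq_iff (hc : ∀ n, 1 ≤ c n) {i n : ℕ} :
    blockIndex c i = n ↔ blockStart c n ≤ i ∧ i < blockStart c (n + 1) := by
  have hmono : StrictMono (blockStart c) := strictMono_nat_of_lt_succ fun n =>
    add_le_blockStart_add hc n 1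
  rw [blockIndex, Nat.findGreatest_eq_iff]
  constructor
  · rintro ⟨-, hle, hgt⟩
    refine ⟨?_, ?_⟩
    · rcases Nat.eq_zero_or_pos n with rfl | hn
      · simp [blockStart_zero]
      · exact hle hn.ne'
    · by_contra! h
      exact hgt (Nat.lt_succ_self n) ((hmono.id_le (n + 1)).trans h) h
  · rintro ⟨hle, hlt⟩
    refine ⟨(hmono.id_le n).trans hle, fun _ => hle, fun k hk _ h => ?_⟩
    have : blockStart c (n + 1) ≤ blockStart c k := hmono.monotone hk
    omega

lemma natCard_blockIndex_fiber (hc : ∀ n, 1 ≤ c n) (n : ℕ) :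
    Nat.card {i // blockIndex c i = n} = c n := by
  rw [Nat.card_congr (Equiv.subtypeEquivRight fun i => blockIndex_eq_iff hc)]
  change Nat.card (Set.Ico (blockStart c n) (blockStart c (n + 1))) = c n
  simp [blockStart_succ]

lemma natDist_blockIndex_le (hc : ∀ n, 1 ≤ c n) (i j : ℕ) :
    Nat.dist (blockIndex c i) (blockIndex c j) ≤ Nat.dist i j := by
  wlog hij : blockIndex c i ≤ blockIndex c j generalizing i j
  · rw [Nat.dist_comm, Nat.dist_comm i]
    exact this j i (by omega)
  obtain ⟨-, hi⟩ := (blockIndex_eq_iff hc).1 (rfl : blockIndex c i = _)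
  obtain ⟨hj, -⟩ := (blockIndex_eq_iff hc).1 (rfl : blockIndex c j = _)
  generalize blockIndex c i = p at *
  generalize blockIndex c j = q at *
  rcases hij.eq_or_lt with rfl | hpq
  · simp
  have hq := add_le_blockStart_add hc (p + 1) (q - (p + 1))
  rw [show p + 1 + (q - (p + 1)) = q by omega] at hq
  simp only [Nat.dist]
  omega

lemma natDist_le_mul_natDist_blockIndex (hc : ∀ n, 1 ≤ c n) (hct : ∀ n, c n ≤ t) (i j : ℕ) :
    Nat.dist i j ≤ t * (Nat.dist (blockIndex c i) (blockIndex c j) + 1) := by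
  wlog hij : blockIndex c i ≤ blockIndex c j generalizing i j
  · rw [Nat.dist_comm, Nat.dist_comm (blockIndex c i)]
    exact this j i (by omega)
  obtain ⟨hi, hi'⟩ := (blockIndex_eq_iff hc).1 (rfl : blockIndex c i = _)
  obtain ⟨hj, hj'⟩ := (blockIndex_eq_iff hc).1 (rfl : blockIndex c j = _)
  generalize blockIndex c i = p at *
  generalize blockIndex c j = q at *
  have hpq : Nat.dist p q + 1 = q + 1 - p := by simp only [Nat.dist]; omega
  have hq := blockStart_add_le hct p (q + 1 - p)
  rw [show p + (q + 1 - p) = q + 1 by omega] at hq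
  have hp := blockStart_add_le hct p 1
  have hpq' := add_le_blockStart_add hc p (q - p)
  rw [show p + (q - p) = q by omega] at hpq'
  have ht : t ≤ t * (q + 1 - p) := Nat.le_mul_of_pos_right t (by omega)
  rw [hpq]
  generalize t * (q + 1 - p) = M at *
  simp only [Nat.dist]
  omega

end Blocks

/-- Cut `ℕ` into consecutive blocks whose lengths are the fibre sizes of `g` and send each
fibre bijectively onto its block. -/
theorem exists_equiv_nat_natDist_le {V : Type*} {g : V → ℕ} {t : ℕ}
    (hg : Function.Surjective g) (ht : ∀ n, {v | g v = n}.encard ≤ t) :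
    ∃ F : V ≃ ℕ, ∀ u v, Nat.dist (g u) (g v) ≤ Nat.dist (F u) (F v) ∧
      Nat.dist (F u) (F v) ≤ t * (Nat.dist (g u) (g v) + 1) := by
  set c : ℕ → ℕ := fun n => Nat.card {v // g v = n}
  have hfin (n : ℕ) : Finite {v // g v = n} := Set.finite_of_encard_le_coe (ht n)
  have hc (n : ℕ) : 1 ≤ c n := by
    obtain ⟨v, hv⟩ := hg n
    exact Nat.card_pos_iff.2 ⟨⟨⟨v, hv⟩⟩, hfin n⟩
  have hct (n : ℕ) : c n ≤ t := (Set.encard_le_coe_iff_finite_ncard_le.1 (ht n)).2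
  have hfiber (n : ℕ) : Nonempty ({v // g v = n} ≃ {i // blockIndex c i = n}) := by
    have hcard := natCard_blockIndex_fiber hc n
    have : Finite {i // blockIndex c i = n} :=
      Nat.finite_of_card_ne_zero (hcard ▸ Nat.one_le_iff_ne_zero.1 (hc n))
    exact Finite.card_eq.1 hcard.symm
  set F := Equiv.ofFiberEquiv fun n => (hfiber n).some
  have hF (v : V) : blockIndex c (F v) = g v := Equiv.ofFiberEquiv_map _ v
  refine ⟨F, fun u v => ?_⟩
  rw [← hF u, ← hF v]
  exact ⟨natDist_blockIndex_le hc _ _, natDist_le_mul_natDist_blockIndex hc hct _ _⟩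

lemma Nat.exists_natDist_le_of_le_of_le {g : ℕ → ℕ} {m x : ℕ}
    (hg : ∀ k, Nat.dist (g k) (g (k + 1)) ≤ m) (h0 : g 0 ≤ x) {j : ℕ} (hj : x ≤ g j) :
    ∃ k, Nat.dist (g k) x ≤ m := by
  induction j with
  | zero => exact ⟨0, by simp [le_antisymm h0 hj]⟩
  | succ j ih =>
    by_cases hx : x ≤ g j
    · exact ih hx
    · refine ⟨j + 1, ?_⟩
      have := hg j
      simp only [Nat.dist] at this ⊢
      omega

section Graph

variable {V : Type*} {G : SimpleGraph V} {a : ℕ → V}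

lemma SimpleGraph.Reachable.dist_lt_encard {u v : V} (h : G.Reachable u v) :
    (G.dist u v : ℕ∞) < {w | G.Reachable u w}.encard := by
  classical
  obtain ⟨p, hp, hlen⟩ := h.exists_path_of_dist
  have hsub : (p.support.toFinset : Set V) ⊆ {w | G.Reachable u w} := fun w hw =>
    ⟨p.takeUntil w (List.mem_toFinset.1 hw)⟩
  calc (G.dist u v : ℕ∞) < p.support.toFinset.card := by
        rw [List.toFinset_card_of_nodup hp.support_nodup, Walk.length_support, hlen]
        exact_mod_cast Nat.lt_succ_self _
    _ = (p.support.toFinset : Set V).encard := (Set.encard_coe_eq_coe_finsetCard _).symm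
    _ ≤ _ := Set.encard_le_encard hsub

lemma encard_le_of_forall_dist_le {f : V → ℕ} (hf : Function.Injective f) {m : ℕ}
    (hfm : ∀ u v, Nat.dist (f u) (f v) ≤ m * G.dist u v) {S : Set V} {c : V} {R : ℕ}
    (hS : ∀ v ∈ S, G.dist c v ≤ R) : S.encard ≤ (2 * (m * R) + 1 : ℕ) := by
  have himg : f '' S ⊆ Finset.Icc (f c - m * R) (f c + m * R) := by
    rintro _ ⟨v, hv, rfl⟩
    have := (hfm c v).trans (Nat.mul_le_mul_left m (hS v hv))
    simp only [Finset.coe_Icc, Set.mem_Icc, Nat.dist] at this ⊢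
    omega
  calc S.encard = (f '' S).encard := (hf.injOn.encard_image).symm
    _ ≤ (Finset.Icc (f c - m * R) (f c + m * R) : Set ℕ).encard := Set.encard_le_encard himg
    _ ≤ (2 * (m * R) + 1 : ℕ) := by
        rw [Set.encard_coe_eq_coe_finsetCard, Nat.card_Icc, Nat.cast_le]
        omega

lemma isAsymptoticRay_of_le_add (hG : G.Connected) (F : V ≃ ℕ) {m m' C : ℕ}
    (hF : ∀ u v, Nat.dist (F u) (F v) ≤ m * G.dist u v + C)
    (hF' : ∀ u v, G.dist u v ≤ m' * Nat.dist (F u) (F v) + C) :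
    IsAsymptoticRay G := by
  refine ⟨F, m + C, m' + C, fun u v => ?_, fun i j => ?_⟩
  · rcases eq_or_ne u v with rfl | huv
    · simp
    have := hG.pos_dist_of_ne huv
    calc Nat.dist (F u) (F v) ≤ m * G.dist u v + C := hF u v
      _ ≤ (m + C) * G.dist u v := by nlinarith
  · rcases eq_or_ne i j with rfl | hij
    · simp
    have : 0 < Nat.dist i j := Nat.dist_pos_of_ne hij
    calc G.dist (F.symm i) (F.symm j) ≤ m' * Nat.dist i j + C := by
          simpa using hF' (F.symm i) (F.symm j)
      _ ≤ (m' + C) * Nat.dist i j := by nlinarith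

namespace IsArrow

lemma dist_add_le (hG : G.Connected) (ha : IsArrow G a) (i k : ℕ) :
    G.dist (a i) (a (i + k)) ≤ k := by
  induction k with
  | zero => simp
  | succ k ih =>
    calc G.dist (a i) (a (i + (k + 1)))
        ≤ G.dist (a i) (a (i + k)) + G.dist (a (i + k)) (a (i + k + 1)) := hG.dist_triangle
      _ ≤ k + 1 := by rw [dist_eq_one_iff_adj.2 (ha.2 (i + k)).1]; omega

lemma dist_eq (hG : G.Connected) (ha : IsArrow G a) (i j : ℕ) :
    G.dist (a i) (a j) = Nat.dist i j := by
  wlog hij : i ≤ j generalizing i j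
  · rw [dist_comm, Nat.dist_comm]
    exact this j i (by omega)
  have hle := ha.dist_add_le hG i (j - i)
  rw [Nat.add_sub_cancel' hij] at hle
  have htri : G.dist (a 0) (a j) ≤ G.dist (a 0) (a i) + G.dist (a i) (a j) := hG.dist_triangle
  rw [(ha.2 i).2, (ha.2 j).2] at htri
  simp only [Nat.dist]
  omega

section CoarseProjection

variable {g : V → ℕ} {D : ℕ}

lemma natDist_le_dist_add (hG : G.Connected) (ha : IsArrow G a)
    (hD : ∀ v, G.dist (a (g v)) v ≤ D) (u v : V) :
    Nat.dist (g u) (g v) ≤ G.dist u v + 2 * D := by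
  have hu := hD u
  have hv := hD v
  calc Nat.dist (g u) (g v) = G.dist (a (g u)) (a (g v)) := (ha.dist_eq hG _ _).symm
    _ ≤ G.dist (a (g u)) u + G.dist u (a (g v)) := hG.dist_triangle
    _ ≤ G.dist (a (g u)) u + (G.dist u v + G.dist v (a (g v))) := by
        gcongr; exact hG.dist_triangle
    _ ≤ G.dist u v + 2 * D := by rw [dist_comm (u := v)]; omega

lemma dist_le_natDist_add (hG : G.Connected) (ha : IsArrow G a)
    (hD : ∀ v, G.dist (a (g v)) v ≤ D) (u v : V) :
    G.dist u v ≤ Nat.dist (g u) (g v) + 2 * D := by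
  have hu := hD u
  have hv := hD v
  calc G.dist u v ≤ G.dist u (a (g u)) + G.dist (a (g u)) v := hG.dist_triangle
    _ ≤ G.dist u (a (g u)) + (G.dist (a (g u)) (a (g v)) + G.dist (a (g v)) v) := by
        gcongr; exact hG.dist_triangle
    _ ≤ Nat.dist (g u) (g v) + 2 * D := by
        rw [dist_comm (u := u), ha.dist_eq hG]; omega

end CoarseProjection

end IsArrow

def arrowEdges (a : ℕ → V) : Set (Sym2 V) := {e | ∃ k, e = s(a k, a (k + 1))}

lemma mem_arrowComponent {n : ℕ} {v : V} :
    v ∈ arrowComponent G a n ↔ (G.deleteEdges (arrowEdges a)).Reachable (a n) v := Iff.rfl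

lemma self_mem_arrowComponent (n : ℕ) : a n ∈ arrowComponent G a n := Reachable.refl _

lemma exists_mem_arrowComponent (hG : G.Connected) (v : V) : ∃ n, v ∈ arrowComponent G a n := by
  suffices ∀ {u w : V} (_ : G.Walk u w), (∃ n, w ∈ arrowComponent G a n) →
      ∃ n, u ∈ arrowComponent G a n from
    this (hG v (a 0)).some ⟨0, self_mem_arrowComponent 0⟩
  intro u w p
  induction p with
  | nil => exact id
  | @cons u x w hux _ ih =>
    intro hw
    obtain ⟨n, hx⟩ := ih hw
    by_cases he : s(u, x) ∈ arrowEdges a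
    · obtain ⟨k, hk⟩ := he
      rcases Sym2.eq_iff.1 hk with ⟨rfl, -⟩ | ⟨rfl, -⟩
      · exact ⟨k, self_mem_arrowComponent k⟩
      · exact ⟨k + 1, self_mem_arrowComponent (k + 1)⟩
    · exact ⟨n, mem_arrowComponent.2 (hx.trans (deleteEdges_adj.2 ⟨hux, he⟩).reachable.symm)⟩

namespace IsArrow

lemma not_reachable_deleteEdges (hG : G.IsAcyclic) (ha : IsArrow G a) {n j : ℕ} (hnj : n < j) :
    ¬ (G.deleteEdges (arrowEdges a)).Reachable (a n) (a j) := by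
  -- `aₙ ~ aⱼ ~ aₙ₊₁` would avoid the bridge `aₙaₙ₊₁`
  intro hr
  have hbridge := isBridge_iff.1 (isAcyclic_iff_forall_adj_isBridge.1 hG (ha.2 n).1)
  have hle : G.deleteEdges (arrowEdges a) ≤ G.deleteEdges {s(a n, a (n + 1))} :=
    deleteEdges_anti (by rintro _ rfl; exact ⟨n, rfl⟩)
  have htail (k : ℕ) :
      (G.deleteEdges {s(a n, a (n + 1))}).Reachable (a (n + 1)) (a (n + 1 + k)) := by
    induction k with
    | zero => rfl
    | succ k ih =>
      refine ih.trans (deleteEdges_adj.2 ⟨(ha.2 (n + 1 + k)).1, fun he => ?_⟩).reachable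
      rcases Sym2.eq_iff.1 he with ⟨h, -⟩ | ⟨-, h⟩ <;> have := ha.1 h <;> omega
  have := htail (j - (n + 1))
  rw [show n + 1 + (j - (n + 1)) = j by omega] at this
  exact hbridge ((hr.mono hle).trans this.symm)

lemma eq_of_mem_arrowComponent (hG : G.IsAcyclic) (ha : IsArrow G a) {n j : ℕ} {v : V}
    (hn : v ∈ arrowComponent G a n) (hj : v ∈ arrowComponent G a j) : n = j := by
  have hr : (G.deleteEdges (arrowEdges a)).Reachable (a n) (a j) := hn.trans hj.symm
  rcases lt_trichotomy n j with h | h | h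
  · exact absurd hr (ha.not_reachable_deleteEdges hG h)
  · exact h
  · exact absurd hr.symm (ha.not_reachable_deleteEdges hG h)

lemma mem_arrowComponent_of_walk (hG : G.IsAcyclic) (ha : IsArrow G a) {n : ℕ} {u v : V}
    (p : G.Walk u v) (hv : v ∈ arrowComponent G a n) (hp : a n ∉ p.support) :
    u ∈ arrowComponent G a n := by
  induction p with
  | nil => exact hv
  | @cons u x w hux p ih =>
    rw [Walk.support_cons, List.mem_cons, not_or] at hp
    have hx := ih hv hp.2
    by_cases he : s(u, x) ∈ arrowEdges a
    · obtain ⟨k, hk⟩ := he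
      obtain ⟨j, rfl⟩ : ∃ j, x = a j := by
        rcases Sym2.eq_iff.1 hk with ⟨-, h⟩ | ⟨-, h⟩ <;> exact ⟨_, h⟩
      cases ha.eq_of_mem_arrowComponent hG hx (self_mem_arrowComponent j)
      exact absurd p.start_mem_support hp.2
    · exact mem_arrowComponent.2 (hx.trans (deleteEdges_adj.2 ⟨hux, he⟩).reachable.symm)

lemma dist_le_dist_of_mem_arrowComponent (hG : G.IsTree) (ha : IsArrow G a) {n : ℕ} {v : V}
    (hv : v ∈ arrowComponent G a n) (j : ℕ) : G.dist (a n) v ≤ G.dist (a j) v := by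
  classical
  obtain ⟨p, hp⟩ := hG.connected.exists_walk_length_eq_dist (a j) v
  have hn : a n ∈ p.support := by
    by_contra hn
    have := ha.eq_of_mem_arrowComponent hG.isAcyclic
      (ha.mem_arrowComponent_of_walk hG.isAcyclic p hv hn) (self_mem_arrowComponent j)
    subst this
    exact hn p.start_mem_support
  calc G.dist (a n) v ≤ (p.dropUntil _ hn).length := dist_le _
    _ ≤ p.length := p.length_dropUntil_le_length hn
    _ = G.dist (a j) v := hp

lemma exists_le_apply (ha : IsArrow G a) {f : V → ℕ} {m' : ℕ}
    (hf' : ∀ u v, G.dist u v ≤ m' * Nat.dist (f u) (f v)) (x : ℕ) : ∃ j, x ≤ f (a j) := by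
  by_contra! h
  set j := m' * (f (a 0) + x) + 1
  have hj := hf' (a 0) (a j)
  rw [(ha.2 j).2] at hj
  have : m' * Nat.dist (f (a 0)) (f (a j)) ≤ m' * (f (a 0) + x) := by
    have := h j
    gcongr
    simp only [Nat.dist]
    omega
  omega

lemma dist_le_of_mem_arrowComponent (hG : G.IsTree) (ha : IsArrow G a) {f : V → ℕ} {m m' : ℕ}
    (hf : ∀ u v, Nat.dist (f u) (f v) ≤ m * G.dist u v)
    (hf' : ∀ u v, G.dist u v ≤ m' * Nat.dist (f u) (f v)) {n : ℕ} {v : V}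
    (hv : v ∈ arrowComponent G a n) : G.dist (a n) v ≤ m' * (m + f (a 0)) := by
  rcases le_or_gt (f (a 0)) (f v) with h0 | h0
  · obtain ⟨j, hj⟩ := ha.exists_le_apply hf' (f v)
    have hstep (k : ℕ) : Nat.dist (f (a k)) (f (a (k + 1))) ≤ m := by
      simpa [dist_eq_one_iff_adj.2 (ha.2 k).1] using hf (a k) (a (k + 1))
    obtain ⟨k, hk⟩ := Nat.exists_natDist_le_of_le_of_le hstep h0 hj
    calc G.dist (a n) v ≤ G.dist (a k) v := ha.dist_le_dist_of_mem_arrowComponent hG hv k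
      _ ≤ m' * Nat.dist (f (a k)) (f v) := hf' _ _
      _ ≤ m' * (m + f (a 0)) := by gcongr; omega
  · calc G.dist (a n) v ≤ G.dist (a 0) v := ha.dist_le_dist_of_mem_arrowComponent hG hv 0
      _ ≤ m' * Nat.dist (f (a 0)) (f v) := hf' _ _
      _ ≤ m' * (m + f (a 0)) := by gcongr; simp only [Nat.dist]; omega

lemma isAsymptoticRay_of_encard_arrowComponent_le (hG : G.IsTree) (ha : IsArrow G a) {t : ℕ}
    (ht : ∀ n, (arrowComponent G a n).encard ≤ t) : IsAsymptoticRay G := by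
  choose g hg using exists_mem_arrowComponent hG.connected (a := a)
  have hfiber (n : ℕ) : {v | g v = n} = arrowComponent G a n := by
    ext v
    exact ⟨fun h => h ▸ hg v, ha.eq_of_mem_arrowComponent hG.isAcyclic (hg v)⟩
  have hg_surj : Function.Surjective g := fun n =>
    ⟨a n, ha.eq_of_mem_arrowComponent hG.isAcyclic (hg _) (self_mem_arrowComponent n)⟩
  obtain ⟨F, hF⟩ := exists_equiv_nat_natDist_le hg_surj fun n => hfiber n ▸ ht n
  have hD (v : V) : G.dist (a (g v)) v ≤ t := by
    have hr := mem_arrowComponent.1 (hg v)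
    have := (hr.dist_lt_encard.trans_le (ht (g v))).le
    exact (hr.dist_anti (deleteEdges_le _)).trans (by exact_mod_cast this)
  refine isAsymptoticRay_of_le_add hG.connected F (m := t) (m' := 1)
    (C := t * (2 * t + 1) + 2 * t) (fun u v => ?_) (fun u v => ?_)
  · calc Nat.dist (F u) (F v) ≤ t * (Nat.dist (g u) (g v) + 1) := (hF u v).2
      _ ≤ t * (G.dist u v + 2 * t + 1) := by
          gcongr; exact ha.natDist_le_dist_add hG.connected hD u v
      _ ≤ t * G.dist u v + (t * (2 * t + 1) + 2 * t) := by ring_nf; omega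
  · have := (hF u v).1
    have := ha.dist_le_natDist_add hG.connected hD u v
    omega

end IsArrow

lemma IsAsymptoticRay.exists_encard_arrowComponent_le (h : IsAsymptoticRay G) (hG : G.IsTree)
    (ha : IsArrow G a) : ∃ t : ℕ, ∀ n, (arrowComponent G a n).encard ≤ t := by
  obtain ⟨f, m, m', hf, hf'⟩ := h
  have hf'' (u v : V) : G.dist u v ≤ m' * Nat.dist (f u) (f v) := by
    simpa using hf' (f u) (f v)
  exact ⟨_, fun n => encard_le_of_forall_dist_le f.injective hf fun _ hv =>
    ha.dist_le_of_mem_arrowComponent hG hf hf'' hv⟩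

end Graph

theorem tree_asymptoticRay_iff_general {V : Type*} (T : SimpleGraph V)
    (hT : T.IsTree)
    (a : ℕ → V) (ha : IsArrow T a) :
    IsAsymptoticRay T ↔ ∃ t : ℕ, ∀ n : ℕ, (arrowComponent T a n).encard ≤ (t : ℕ∞) :=
  ⟨fun h => h.exists_encard_arrowComponent_le hT ha,
    fun ⟨_, ht⟩ => ha.isAsymptoticRay_of_encard_arrowComponent_le hT ht⟩

/-- An infinite tree `T` with degrees bounded by `s` and an arrow `(aₙ)` is
an asymptotic ray iff the components `T(aₙ)` obtained by deleting the arrow's edges have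
uniformly bounded numbers of vertices. -/
theorem tree_asymptoticRay_iff {V : Type*} [Infinite V] (T : SimpleGraph V)
    (hT : T.IsTree) (s : ℕ) (hdeg : ∀ v : V, (T.neighborSet v).encard ≤ (s : ℕ∞))
    (a : ℕ → V) (ha : IsArrow T a) :
    IsAsymptoticRay T ↔ ∃ t : ℕ, ∀ n : ℕ, (arrowComponent T a n).encard ≤ (t : ℕ∞) :=
  tree_asymptoticRay_iff_general T hT a ha
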